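/- Suppose u_{i+1} − u_i = 1 and v_{i+1} − v_i = 1 for all i ∈ [n−1] (so u_i = i and v_i = m − n + i for all i ∈ [n]). Then for every integer r ≥ 2, the poset P_{𝓛×[r]} is pure if and only if r = m. -/

import Mathlib

namespace LadderPaper

/-- The tuple `a_{i,j}`: entry `t` is `u t` for `t < i` and `max (j + (t - i)) (u t)` for
`t ≥ i` (indices `t ∈ [1,n]`; entries outside `[1,n]` are set to `0`). -/
def atuple (u : ℕ → ℤ) (n i : ℕ) (j : ℤ) : ℕ → ℤ := fun t =>
  if 1 ≤ t ∧ t ≤ n then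
    (if t < i then u t else max (j + ((t : ℤ) - (i : ℤ))) (u t))
  else 0

/-- The tuple `b_{i,j}`: like `a_{i,j}` but with `i`-th entry `j - 1`. -/
def btuple (u : ℕ → ℤ) (n i : ℕ) (j : ℤ) : ℕ → ℤ := fun t =>
  if 1 ≤ t ∧ t ≤ n then
    (if t < i then u t
     else if t = i then j - 1
     else max (j + ((t : ℤ) - (i : ℤ))) (u t))
  else 0

/-- The tuple `(u_1, …, u_n)`. -/
def utuple (u : ℕ → ℤ) (n : ℕ) : ℕ → ℤ := fun t =>
  if 1 ≤ t ∧ t ≤ n then u t else 0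

/-- The lattice `𝓛` of tuples `c` with `u t ≤ c t ≤ v t` for `t ∈ [1,n]`, strictly
increasing entries, and (normalization) `c t = 0` outside `[1,n]`.  It carries the
componentwise (induced product) order. -/
def ladderL (n : ℕ) (u v : ℕ → ℤ) : Set (ℕ → ℤ) :=
  {c | (∀ t, 1 ≤ t → t ≤ n → u t ≤ c t ∧ c t ≤ v t) ∧
       (∀ t, 1 ≤ t → t + 1 ≤ n → c t < c (t + 1)) ∧
       (∀ t, t = 0 ∨ n < t → c t = 0)}

/-- The set `P_𝓛 = { a_{i,j} : i ∈ [n], j ∈ [u_i + 1, v_i] }`. -/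
def PL (n : ℕ) (u v : ℕ → ℤ) : Set (ℕ → ℤ) :=
  {x | ∃ i : ℕ, ∃ j : ℤ, 1 ≤ i ∧ i ≤ n ∧ u i + 1 ≤ j ∧ j ≤ v i ∧ x = atuple u n i j}

/-- The product poset `𝓛 × [r]`. -/
def ladderLr (n : ℕ) (u v : ℕ → ℤ) (r : ℤ) : Set ((ℕ → ℤ) × ℤ) :=
  {p | p.1 ∈ ladderL n u v ∧ 1 ≤ p.2 ∧ p.2 ≤ r}

/-- The set `P_{𝓛×[r]} = { (a_{i,j}, 1) } ∪ { ((u_1,…,u_n), k) : k ∈ [2,r] }`. -/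
def PLr (n : ℕ) (u v : ℕ → ℤ) (r : ℤ) : Set ((ℕ → ℤ) × ℤ) :=
  {p | (p.1 ∈ PL n u v ∧ p.2 = 1) ∨ (p.1 = utuple u n ∧ 2 ≤ p.2 ∧ p.2 ≤ r)}

/-- `ε_i > 1`, with the convention `ε_n > 1` (i.e. `i = n` or `u_{i+1} - u_i > 1`). -/
def epsGt1 (u : ℕ → ℤ) (n i : ℕ) : Prop := i = n ∨ 1 < u (i + 1) - u i

/-- `θ_{i-1} > 1`, with the convention `θ_0 > 1` (i.e. `i = 1` or `v_i - v_{i-1} > 1`). -/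
def thetaGt1 (v : ℕ → ℤ) (i : ℕ) : Prop := i = 1 ∨ 1 < v i - v (i - 1)

/-- Membership in `C = { i ∈ [n-1] : v_i < u_{i+1} } ∪ { n }`. -/
def inC (n : ℕ) (u v : ℕ → ℤ) (i : ℕ) : Prop :=
  (1 ≤ i ∧ i + 1 ≤ n ∧ v i < u (i + 1)) ∨ i = n

/-- The set `C = { i ∈ [n-1] : v_i < u_{i+1} } ∪ { n }`. -/
def Cset (n : ℕ) (u v : ℕ → ℤ) : Set ℕ :=
  {i | 1 ≤ i ∧ i + 1 ≤ n ∧ v i < u (i + 1)} ∪ {n}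

/-- `[p,q]` is one of the blocks `[p_s, q_s]` determined by `C`: `q ∈ C`,
no element of `C` lies in `[p, q-1]`, and either `p = 1` or `p - 1 ∈ C`. -/
def IsBlock (n : ℕ) (u v : ℕ → ℤ) (p q : ℕ) : Prop :=
  1 ≤ p ∧ p ≤ q ∧ q ≤ n ∧ inC n u v q ∧
    (∀ j, p ≤ j → j < q → ¬ inC n u v j) ∧ (p = 1 ∨ inC n u v (p - 1))

/-- `i0 = min { i ∈ [p,q] : ε_i > 1 }` (with the convention `ε_n > 1`). -/
def IsBlockMin (n : ℕ) (u : ℕ → ℤ) (p q i0 : ℕ) : Prop :=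
  p ≤ i0 ∧ i0 ≤ q ∧ epsGt1 u n i0 ∧ ∀ j, p ≤ j → j < i0 → ¬ epsGt1 u n j

/-- The comparability graph of a poset: two distinct elements are adjacent
iff they are comparable. -/
def compGraph (α : Type*) [Preorder α] : SimpleGraph α where
  Adj x y := x ≠ y ∧ (x ≤ y ∨ y ≤ x)
  symm := ⟨fun x y h => ⟨Ne.symm h.1, Or.symm h.2⟩⟩
  loopless := ⟨fun x h => h.1 rfl⟩

/-- A poset is pure if all of its maximal chains have the same cardinality
(equivalently, the same length). -/
def IsPure (α : Type*) [Preorder α] : Prop :=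
  ∀ A B : Set α, IsMaxChain (· ≤ ·) A → IsMaxChain (· ≤ ·) B → A.ncard = B.ncard

/-!
With `u_i = i` and `v_i = m - n + i` the generators are `a_{i,i+d}` with `i ∈ [1,n]`,
`d ∈ [1,m-n]`, and `a_{i,i+d} ≤ a_{i',i'+d'}` iff `i' ≤ i` and `d ≤ d'`. So the layer
`{(a_{i,j}, 1)}` of `P_{𝓛×[r]}` is a grid `[1,n] × [1,m-n]`, whose maximal chains all have
`m - 1` elements, while the points `((u_1,…,u_n), k)`, `k ∈ [2,r]`, form a chain of `r - 1`
elements incomparable with the grid. Every maximal chain lies in one of the two parts, and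
both parts contain one.
-/

open Set

theorem _root_.IsChain.subset_or_subset_compl {α : Type*} [LE α] {A s : Set α}
    (hA : IsChain (· ≤ ·) A) (hs : ∀ x ∈ s, ∀ y ∉ s, ¬ x ≤ y ∧ ¬ y ≤ x) :
    A ⊆ s ∨ A ⊆ sᶜ := by
  by_contra! h
  obtain ⟨x, hxA, hx⟩ := not_subset.1 h.2
  obtain ⟨y, hyA, hy⟩ := not_subset.1 h.1
  rw [notMem_compl_iff] at hx
  have hxy := hs x hx y hy
  rcases hA hxA hyA (fun h => hy (h ▸ hx)) with hle | hle
  exacts [hxy.1 hle, hxy.2 hle]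

theorem _root_.IsMaxChain.mem_of_forall_le_or_le {α : Type*} [LE α] {A : Set α}
    (hA : IsMaxChain (· ≤ ·) A) {c : α} (hc : ∀ a ∈ A, a ≤ c ∨ c ≤ a) : c ∈ A :=
  (hA.2 (hA.1.insert fun a ha _ => (hc a ha).symm) (subset_insert _ _)).symm ▸ mem_insert _ _

theorem _root_.IsMaxChain.ncard_eq_of_rank {α : Type*} [PartialOrder α] {A : Set α}
    (hA : IsMaxChain (· ≤ ·) A) (f : α → ℤ) {lo hi : α}
    (hlo : ∀ a ∈ A, lo ≤ a) (hhi : ∀ a ∈ A, a ≤ hi)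
    (hmono : ∀ a ∈ A, ∀ b ∈ A, a < b → f a < f b)
    (hfill : ∀ a ∈ A, ∀ b ∈ A, a ≤ b → f a + 1 < f b →
      ∃ c, a ≤ c ∧ c ≤ b ∧ f c = f a + 1) :
    A.ncard = (f hi + 1 - f lo).toNat := by
  have hloA : lo ∈ A := hA.mem_of_forall_le_or_le fun a ha => Or.inr (hlo a ha)
  have hhiA : hi ∈ A := hA.mem_of_forall_le_or_le fun a ha => Or.inl (hhi a ha)
  have le_of_rank_le {a b} (ha : a ∈ A) (hb : b ∈ A) (hab : f a ≤ f b) : a ≤ b := by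
    by_contra h
    exact (hmono b hb a ha (hA.1.lt_of_not_ge ha hb h)).not_ge hab
  have rank_le_of_le {a b} (ha : a ∈ A) (hb : b ∈ A) (hab : a ≤ b) : f a ≤ f b := by
    rcases hab.eq_or_lt with rfl | h
    exacts [le_rfl, (hmono a ha b hb h).le]
  have hinj : InjOn f A := fun a ha b hb h =>
    (le_of_rank_le ha hb h.le).antisymm (le_of_rank_le hb ha h.ge)
  have hsub : f '' A ⊆ Icc (f lo) (f hi) := image_subset_iff.2 fun a ha =>
    ⟨rank_le_of_le hloA ha (hlo a ha), rank_le_of_le ha hhiA (hhi a ha)⟩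
  have hfin : A.Finite := ((finite_Icc _ _).subset hsub).of_finite_image hinj
  have himage : f '' A = Icc (f lo) (f hi) := by
    refine hsub.antisymm fun k hk => ?_
    by_contra hkA
    have hne {x} (hx : x ∈ A) : f x ≠ k := fun h => hkA ⟨x, hx, h⟩
    -- `hfill` gives `c` of rank `f a + 1` between the last element `a` of `A` below rank `k`
    -- and the first one `b` above it; maximality puts `c` in `A`, contradicting the choice of `a`.
    obtain ⟨a, ⟨ha, hak⟩, hamax⟩ := exists_max_image {x ∈ A | f x < k} f
      (hfin.subset (sep_subset _ _)) ⟨lo, hloA, lt_of_le_of_ne hk.1 (hne hloA)⟩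
    obtain ⟨b, ⟨hb, hkb⟩, hbmin⟩ := exists_min_image {x ∈ A | k < f x} f
      (hfin.subset (sep_subset _ _)) ⟨hi, hhiA, lt_of_le_of_ne hk.2 (hne hhiA).symm⟩
    obtain ⟨c, hac, hcb, hc⟩ := hfill a ha b hb (le_of_rank_le ha hb (by omega)) (by omega)
    have hcA : c ∈ A := hA.mem_of_forall_le_or_le fun x hx => by
      rcases (hne hx).lt_or_gt with hxk | hkx
      · exact Or.inl ((le_of_rank_le hx ha (hamax x ⟨hx, hxk⟩)).trans hac)
      · exact Or.inr (hcb.trans (le_of_rank_le hb hx (hbmin x ⟨hx, hkx⟩)))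
    have := hamax c ⟨hcA, lt_of_le_of_ne (by omega) (hne hcA)⟩
    omega
  rw [← hinj.ncard_image, himage, ← Finset.coe_Icc, ncard_coe_finset, Int.card_Icc]

theorem isPure_iff_of_forall_incomparable {α : Type*} [Preorder α] (s : Set α) {p q : ℕ}
    (hs : ∀ x ∈ s, ∀ y ∉ s, ¬ x ≤ y ∧ ¬ y ≤ x) (hsne : s.Nonempty) (hsc : sᶜ.Nonempty)
    (hp : ∀ A, IsMaxChain (· ≤ ·) A → A ⊆ s → A.ncard = p)
    (hq : ∀ A, IsMaxChain (· ≤ ·) A → A ⊆ sᶜ → A.ncard = q) :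
    IsPure α ↔ p = q := by
  have hcases (A : Set α) (hA : IsMaxChain (· ≤ ·) A) : A.ncard = p ∨ A.ncard = q :=
    (hA.1.subset_or_subset_compl hs).imp (hp A hA) (hq A hA)
  constructor
  · intro hpure
    obtain ⟨x, hx⟩ := hsne
    obtain ⟨y, hy⟩ := hsc
    obtain ⟨A, hA, hxA⟩ := (IsChain.singleton (r := (· ≤ ·)) (a := x)).exists_maxChain
    obtain ⟨B, hB, hyB⟩ := (IsChain.singleton (r := (· ≤ ·)) (a := y)).exists_maxChain
    have hAs : A ⊆ s :=
      (hA.1.subset_or_subset_compl hs).resolve_right fun h => h (hxA rfl) hx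
    have hBs : B ⊆ sᶜ := (hB.1.subset_or_subset_compl hs).resolve_left fun h => hy (h (hyB rfl))
    rw [← hp A hA hAs, ← hq B hB hBs]
    exact hpure A B hA hB
  · rintro rfl A B hA hB
    rcases hcases A hA with h | h <;> rcases hcases B hB with h' | h' <;> omega

lemma eq_add_of_sub_eq_one {f : ℕ → ℤ} {n : ℕ}
    (h : ∀ i, 1 ≤ i → i + 1 ≤ n → f (i + 1) - f i = 1) {t : ℕ} (ht1 : 1 ≤ t) (htn : t ≤ n) :
    f t = f 1 + (t - 1) := by
  induction t, ht1 using Nat.le_induction with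
  | base => simp
  | succ k hk ih =>
    have := h k hk htn
    have := ih (by omega)
    push_cast
    linarith

section Congr

variable {n : ℕ} {u u' v v' : ℕ → ℤ}

lemma atuple_congr (hu : ∀ t, 1 ≤ t → t ≤ n → u t = u' t) {i : ℕ} {j : ℤ} :
    atuple u n i j = atuple u' n i j := by
  funext t
  by_cases ht : 1 ≤ t ∧ t ≤ n
  · simp only [atuple, if_pos ht, hu t ht.1 ht.2]
  · simp only [atuple, if_neg ht]

lemma utuple_congr (hu : ∀ t, 1 ≤ t → t ≤ n → u t = u' t) : utuple u n = utuple u' n := by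
  funext t
  by_cases ht : 1 ≤ t ∧ t ≤ n
  · simp only [utuple, if_pos ht, hu t ht.1 ht.2]
  · simp only [utuple, if_neg ht]

lemma PLr_congr (hu : ∀ t, 1 ≤ t → t ≤ n → u t = u' t) (hv : ∀ t, 1 ≤ t → t ≤ n → v t = v' t)
    {r : ℤ} : PLr n u v r = PLr n u' v' r := by
  have hPL : PL n u v = PL n u' v' := by
    ext x
    refine exists_congr fun i => exists_congr fun j =>
      and_congr_right fun hi1 => and_congr_right fun hin => ?_
    rw [hu i hi1 hin, hv i hi1 hin, atuple_congr hu]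
  simp only [PLr, hPL, utuple_congr hu]

end Congr

lemma ncard_of_isMaxChain_of_snd_ne_one {n : ℕ} {u v : ℕ → ℤ} {r : ℤ} (hr : 2 ≤ r)
    {A : Set (PLr n u v r)} (hA : IsMaxChain (· ≤ ·) A) (hAs : ∀ a ∈ A, a.val.2 ≠ 1) :
    A.ncard = (r - 1).toNat := by
  have hform (a) (ha : a ∈ A) : a.val.1 = utuple u n ∧ 2 ≤ a.val.2 ∧ a.val.2 ≤ r :=
    a.2.resolve_left fun h => hAs a ha h.2
  let lo : PLr n u v r := ⟨(utuple u n, 2), Or.inr ⟨rfl, le_rfl, hr⟩⟩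
  let hi : PLr n u v r := ⟨(utuple u n, r), Or.inr ⟨rfl, hr, le_rfl⟩⟩
  rw [hA.ncard_eq_of_rank (fun x => x.val.2) (lo := lo) (hi := hi)
    (fun a ha => ⟨(hform a ha).1.ge, (hform a ha).2.1⟩)
    (fun a ha => ⟨(hform a ha).1.le, (hform a ha).2.2⟩) ?_ ?_]
  · show (r + 1 - 2).toNat = _
    omega
  · intro a ha b hb hab
    refine lt_of_le_of_ne hab.le.2 fun h => hab.ne (Subtype.ext (Prod.ext ?_ h))
    exact (hform a ha).1.trans (hform b hb).1.symm
  · intro a ha b hb _ hgap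
    obtain ⟨hau, ha2, -⟩ := hform a ha
    obtain ⟨hbu, -, hbr⟩ := hform b hb
    refine ⟨⟨(utuple u n, a.val.2 + 1), Or.inr ⟨rfl, by omega, by omega⟩⟩,
      ⟨hau.le, le_add_of_nonneg_right zero_le_one⟩, ⟨hbu.ge, hgap.le⟩, rfl⟩

section UnitLadder

variable {n m : ℕ} {r : ℤ}

abbrev unitLadderPLr (n m : ℕ) (r : ℤ) : Set ((ℕ → ℤ) × ℤ) :=
  PLr n (↑) (fun t => (m : ℤ) - n + t) r

-- On `a_{i,i+d}`, the count of moved entries recovers `i` and `x n = n + d` recovers `d`.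
open Finset in
def ladderRank (n : ℕ) (x : ℕ → ℤ) : ℤ := x n + #{t ∈ Icc 1 n | x t ≠ t}

lemma atuple_apply {i t : ℕ} {d : ℤ} (hd : 0 ≤ d) (ht1 : 1 ≤ t) (htn : t ≤ n) :
    atuple (↑) n i (i + d) t = if t < i then (t : ℤ) else t + d := by
  simp only [atuple, if_pos (And.intro ht1 htn)]
  split_ifs <;> omega

lemma atuple_le_atuple_iff {i i' : ℕ} {d d' : ℤ} (hi1 : 1 ≤ i) (hin : i ≤ n) (hd : 0 < d)
    (hd' : 0 ≤ d') :
    atuple (↑) n i (i + d) ≤ atuple (↑) n i' (i' + d') ↔ i' ≤ i ∧ d ≤ d' := by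
  constructor
  · intro h
    have := Pi.le_def.1 h i
    rw [atuple_apply hd.le hi1 hin, atuple_apply hd' hi1 hin] at this
    split_ifs at this <;> omega
  · rintro ⟨hii, hdd⟩
    refine Pi.le_def.2 fun t => ?_
    by_cases ht : 1 ≤ t ∧ t ≤ n
    · rw [atuple_apply hd.le ht.1 ht.2, atuple_apply hd' ht.1 ht.2]
      split_ifs <;> omega
    · simp [atuple, ht]

lemma ladderRank_atuple {i : ℕ} {d : ℤ} (hi1 : 1 ≤ i) (hin : i ≤ n) (hd : 0 < d) :
    ladderRank n (atuple (↑) n i (i + d)) = 2 * n + 1 + d - i := by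
  have hmoved : {t ∈ Finset.Icc 1 n | atuple (↑) n i (i + d) t ≠ t} = Finset.Icc i n := by
    ext t
    simp only [Finset.mem_filter, Finset.mem_Icc]
    constructor
    · rintro ⟨⟨ht1, htn⟩, hne⟩
      rw [atuple_apply hd.le ht1 htn] at hne
      split_ifs at hne <;> omega
    · rintro ⟨hit, htn⟩
      rw [atuple_apply hd.le (hi1.trans hit) htn]
      split_ifs <;> omega
  rw [ladderRank, hmoved, Nat.card_Icc, atuple_apply hd.le (hi1.trans hin) le_rfl,
    if_neg (by omega)]
  omega

lemma not_atuple_le_utuple {i : ℕ} {d : ℤ} (hi1 : 1 ≤ i) (hin : i ≤ n) (hd : 0 < d) :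
    ¬ atuple (↑) n i (i + d) ≤ utuple (↑) n := fun h => by
  have := Pi.le_def.1 h i
  simp only [atuple_apply hd.le hi1 hin, lt_irrefl, if_false, utuple,
    if_pos (And.intro hi1 hin)] at this
  omega

lemma mem_PL_iff {x : ℕ → ℤ} : x ∈ PL n (↑) (fun t => (m : ℤ) - n + t) ↔
    ∃ (i : ℕ) (d : ℤ), 1 ≤ i ∧ i ≤ n ∧ 0 < d ∧ d ≤ m - n ∧ x = atuple (↑) n i (i + d) := by
  constructor
  · rintro ⟨i, j, hi1, hin, hj1, hj2, rfl⟩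
    beta_reduce at hj2
    exact ⟨i, j - i, hi1, hin, by omega, by omega, by rw [add_sub_cancel]⟩
  · rintro ⟨i, d, hi1, hin, hd, hdm, rfl⟩
    exact ⟨i, i + d, hi1, hin, by omega, by beta_reduce; omega, rfl⟩

lemma atuple_mem_unitLadderPLr {i : ℕ} {d : ℤ} (hi1 : 1 ≤ i) (hin : i ≤ n)
    (hd : 0 < d) (hdm : d ≤ m - n) : (atuple (↑) n i (i + d), 1) ∈ unitLadderPLr n m r :=
  Or.inl ⟨mem_PL_iff.2 ⟨i, d, hi1, hin, hd, hdm, rfl⟩, rfl⟩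

lemma exists_val_eq_atuple {x : unitLadderPLr n m r} (hx : x.val.2 = 1) :
    ∃ (i : ℕ) (d : ℤ), 1 ≤ i ∧ i ≤ n ∧ 0 < d ∧ d ≤ m - n ∧
      x.val = (atuple (↑) n i (i + d), 1) := by
  rcases x.2 with ⟨hPL, -⟩ | ⟨-, h2, -⟩
  · obtain ⟨i, d, hi1, hin, hd, hdm, he⟩ := mem_PL_iff.1 hPL
    exact ⟨i, d, hi1, hin, hd, hdm, Prod.ext he hx⟩
  · omega

lemma le_iff_of_val_eq_atuple {x y : unitLadderPLr n m r} {i i' : ℕ} {d d' : ℤ}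
    (hi1 : 1 ≤ i) (hin : i ≤ n) (hd : 0 < d) (hd' : 0 < d')
    (hx : x.val = (atuple (↑) n i (i + d), 1)) (hy : y.val = (atuple (↑) n i' (i' + d'), 1)) :
    x ≤ y ↔ i' ≤ i ∧ d ≤ d' := by
  rw [← Subtype.coe_le_coe, hx, hy, Prod.mk_le_mk, atuple_le_atuple_iff hi1 hin hd hd'.le]
  simp

lemma ladderRank_of_val_eq_atuple {x : unitLadderPLr n m r} {i : ℕ} {d : ℤ}
    (hi1 : 1 ≤ i) (hin : i ≤ n) (hd : 0 < d) (hx : x.val = (atuple (↑) n i (i + d), 1)) :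
    ladderRank n x.val.1 = 2 * n + 1 + d - i := by
  rw [hx]
  exact ladderRank_atuple hi1 hin hd

lemma ladderRank_lt_of_lt {a b : unitLadderPLr n m r} (ha : a.val.2 = 1)
    (hb : b.val.2 = 1) (hab : a < b) : ladderRank n a.val.1 < ladderRank n b.val.1 := by
  obtain ⟨i, d, hi1, hin, hd, -, hai⟩ := exists_val_eq_atuple ha
  obtain ⟨i', d', hi1', hin', hd', -, hbi⟩ := exists_val_eq_atuple hb
  obtain ⟨hii, hdd⟩ := (le_iff_of_val_eq_atuple hi1 hin hd hd' hai hbi).1 hab.le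
  rw [ladderRank_of_val_eq_atuple hi1 hin hd hai, ladderRank_of_val_eq_atuple hi1' hin' hd' hbi]
  by_contra! h
  obtain rfl : i = i' := by omega
  obtain rfl : d = d' := by omega
  exact hab.ne (Subtype.ext (hai.trans hbi.symm))

lemma exists_between_of_ladderRank {a b : unitLadderPLr n m r} (ha : a.val.2 = 1)
    (hb : b.val.2 = 1) (hab : a ≤ b) (hgap : ladderRank n a.val.1 + 1 < ladderRank n b.val.1) :
    ∃ c, a ≤ c ∧ c ≤ b ∧ ladderRank n c.val.1 = ladderRank n a.val.1 + 1 := by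
  obtain ⟨i, d, hi1, hin, hd, hdm, hai⟩ := exists_val_eq_atuple ha
  obtain ⟨i', d', hi1', hin', hd', hdm', hbi⟩ := exists_val_eq_atuple hb
  obtain ⟨hii, hdd⟩ := (le_iff_of_val_eq_atuple hi1 hin hd hd' hai hbi).1 hab
  rw [ladderRank_of_val_eq_atuple hi1 hin hd hai,
    ladderRank_of_val_eq_atuple hi1' hin' hd' hbi] at hgap
  rw [ladderRank_of_val_eq_atuple hi1 hin hd hai]
  obtain ⟨i'', d'', hi1'', hin'', hd'', hdm'', hii', hdd', hii'', hdd'', hrank⟩ :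
      ∃ (i'' : ℕ) (d'' : ℤ), 1 ≤ i'' ∧ i'' ≤ n ∧ 0 < d'' ∧ d'' ≤ m - n ∧
        i'' ≤ i ∧ d ≤ d'' ∧ i' ≤ i'' ∧ d'' ≤ d' ∧ d'' - i'' = d - i + 1 := by
    rcases hii.lt_or_eq with hlt | rfl
    · exact ⟨i - 1, d, by omega, by omega, hd, hdm, by omega, le_rfl, by omega, hdd, by omega⟩
    · exact ⟨i', d + 1, hi1, hin, by omega, by omega, le_rfl, by omega, le_rfl, by omega,
        by omega⟩
  let c : unitLadderPLr n m r := ⟨_, atuple_mem_unitLadderPLr hi1'' hin'' hd'' hdm''⟩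
  refine ⟨c, (le_iff_of_val_eq_atuple hi1 hin hd hd'' hai rfl).2 ⟨hii', hdd'⟩,
    (le_iff_of_val_eq_atuple hi1'' hin'' hd'' hd' rfl hbi).2 ⟨hii'', hdd''⟩, ?_⟩
  rw [ladderRank_of_val_eq_atuple hi1'' hin'' hd'' rfl]
  omega

lemma ncard_of_isMaxChain_of_snd_eq_one (hn : 1 ≤ n) (hnm : n < m)
    {A : Set (unitLadderPLr n m r)} (hA : IsMaxChain (· ≤ ·) A) (hAs : ∀ a ∈ A, a.val.2 = 1) :
    A.ncard = m - 1 := by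
  let lo : unitLadderPLr n m r := ⟨_, atuple_mem_unitLadderPLr (d := 1) hn le_rfl one_pos
    (by omega)⟩
  let hi : unitLadderPLr n m r := ⟨_, atuple_mem_unitLadderPLr (d := m - n) le_rfl hn
    (by omega) le_rfl⟩
  rw [hA.ncard_eq_of_rank (fun x => ladderRank n x.val.1) (lo := lo) (hi := hi) ?_ ?_
    (fun a ha b hb => ladderRank_lt_of_lt (hAs a ha) (hAs b hb))
    (fun a ha b hb => exists_between_of_ladderRank (hAs a ha) (hAs b hb)),
    ladderRank_of_val_eq_atuple (x := lo) hn le_rfl one_pos rfl,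
    ladderRank_of_val_eq_atuple (x := hi) le_rfl hn (by omega) rfl]
  · omega
  · intro a ha
    obtain ⟨i, d, hi1, hin, hd, -, hai⟩ := exists_val_eq_atuple (hAs a ha)
    exact (le_iff_of_val_eq_atuple hn le_rfl one_pos hd rfl hai).2 ⟨hin, by omega⟩
  · intro a ha
    obtain ⟨i, d, hi1, hin, hd, hdm, hai⟩ := exists_val_eq_atuple (hAs a ha)
    exact (le_iff_of_val_eq_atuple hi1 hin hd (by omega) hai rfl).2 ⟨hi1, hdm⟩

lemma not_le_and_not_le_of_snd_eq_one {x y : unitLadderPLr n m r} (hx : x.val.2 = 1)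
    (hy : y.val.2 ≠ 1) : ¬ x ≤ y ∧ ¬ y ≤ x := by
  obtain ⟨i, d, hi1, hin, hd, -, hxi⟩ := exists_val_eq_atuple hx
  obtain ⟨hyu, hy2, -⟩ := y.2.resolve_left fun h => hy h.2
  refine ⟨fun h => not_atuple_le_utuple hi1 hin hd ?_, fun h => ?_⟩
  · rw [← hyu]
    simpa only [hxi] using (Subtype.coe_le_coe.2 h).1
  · have := (Subtype.coe_le_coe.2 h).2
    omega

end UnitLadder

theorem isPure_unitLadderPLr_iff {n m : ℕ} (hn : 1 ≤ n) (hnm : n < m) {r : ℕ} (hr : 2 ≤ r) :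
    IsPure (unitLadderPLr n m r) ↔ r = m := by
  rw [isPure_iff_of_forall_incomparable {x : unitLadderPLr n m r | x.val.2 = 1} (p := m - 1)
    (q := ((r : ℤ) - 1).toNat)
    (fun x hx y hy => not_le_and_not_le_of_snd_eq_one hx hy)
    ⟨⟨_, atuple_mem_unitLadderPLr (d := 1) hn le_rfl one_pos (by omega)⟩, rfl⟩
    ⟨⟨(utuple (↑) n, 2), Or.inr ⟨rfl, le_rfl, by omega⟩⟩, by simp⟩
    (fun A hA hAs => ncard_of_isMaxChain_of_snd_eq_one hn hnm hA fun a ha => hAs ha)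
    (fun A hA hAs => ncard_of_isMaxChain_of_snd_ne_one (by omega) hA fun a ha => hAs ha)]
  omega

theorem stmt17_general
    (n m : ℕ) (u v : ℕ → ℤ)
    (hn : 1 ≤ n) (hnm : n < m)
    (hu1 : u 1 = 1)
    (hvn : v n = (m : ℤ))
    (hue : ∀ i, 1 ≤ i → i + 1 ≤ n → u (i + 1) - u i = 1)
    (hve : ∀ i, 1 ≤ i → i + 1 ≤ n → v (i + 1) - v i = 1) :
    ∀ r : ℕ, 2 ≤ r → (IsPure ↥(PLr n u v (r : ℤ)) ↔ r = m) := by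
  intro r hr
  have hu (t) (ht1 : 1 ≤ t) (htn : t ≤ n) : u t = t := by
    rw [eq_add_of_sub_eq_one hue ht1 htn, hu1]
    ring
  have hv (t) (ht1 : 1 ≤ t) (htn : t ≤ n) : v t = m - n + t := by
    have := eq_add_of_sub_eq_one hve hn le_rfl
    rw [eq_add_of_sub_eq_one hve ht1 htn]
    omega
  rw [PLr_congr hu hv]
  exact isPure_unitLadderPLr_iff hn hnm hr

theorem stmt17
    (n m : ℕ) (u v : ℕ → ℤ)
    (hn : 1 ≤ n) (hnm : n < m)
    (hu1 : u 1 = 1)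
    (humono : ∀ i, 1 ≤ i → i + 1 ≤ n → u i < u (i + 1))
    (hum : u n < (m : ℤ))
    (hv1 : 1 < v 1)
    (hvmono : ∀ i, 1 ≤ i → i + 1 ≤ n → v i < v (i + 1))
    (hvn : v n = (m : ℤ))
    (huv : ∀ i, 1 ≤ i → i ≤ n → u i < v i)
    (hstep : ∀ i, 1 ≤ i → i + 1 ≤ n → u (i + 1) ≤ v i + 1)
    (hue : ∀ i, 1 ≤ i → i + 1 ≤ n → u (i + 1) - u i = 1)
    (hve : ∀ i, 1 ≤ i → i + 1 ≤ n → v (i + 1) - v i = 1) :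
    ∀ r : ℕ, 2 ≤ r → (IsPure ↥(PLr n u v (r : ℤ)) ↔ r = m) :=
  stmt17_general n m u v hn hnm hu1 hvn hue hve

end LadderPaper
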